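/- arXiv:2103.04898 — 2 statements merged into one kernel-verified Lean document; each statement's English description precedes it below -/
import Mathlib

section
/- Suppose asset j is dominant and let K ∈ 𝒦 with K_j > 0. Then for every n ≥ 1, the optimality gap satisfies the upper bound g_1* − g_n(K) ≤ (1/n)·log(1/K_j), where g_1* = E[log(1 + X_j(0))]. -/
/-!
Holding the portfolio `K` over `n` periods yields at least the wealth `K_j R_{n,j}` carried by
asset `j` alone, so `log (Kᵀ R_n) ≥ log K_j + ∑_{k<n} log (1 + X_j(k))`. Taking expectations, each
of the `n` identically distributed terms contributes `g_1^*`, whence `n g_n(K) ≥ log K_j + n g_1^*`.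
-/

open MeasureTheory ProbabilityTheory Filter Finset Real

/-- Compound (total) return of asset `i` over the first `n` periods:
`R_{n,i}(ω) = ∏_{k=0}^{n-1} (1 + X_i(k)(ω))`. -/
noncomputable def compoundReturn {Ω : Type*} {m : ℕ} (X : ℕ → Ω → Fin m → ℝ)
    (n : ℕ) (ω : Ω) (i : Fin m) : ℝ :=
  ∏ k ∈ Finset.range n, (1 + X k ω i)

/-- Expected logarithmic growth with rebalancing period `n`:
`g_n(K) = (1/n) E[log (Kᵀ R_n)]`. -/
noncomputable def elg {Ω : Type*} [MeasureSpace Ω] {m : ℕ} (X : ℕ → Ω → Fin m → ℝ)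
    (n : ℕ) (K : Fin m → ℝ) : ℝ :=
  (n : ℝ)⁻¹ * ∫ ω, Real.log (∑ i, K i * compoundReturn X n ω i)

/-- The admissible set: the unit simplex in `ℝ^m`. -/
def simplex (m : ℕ) : Set (Fin m → ℝ) := {K | (∀ i, 0 ≤ K i) ∧ ∑ i, K i = 1}

section Integrability

variable {α : Type*} [MeasurableSpace α] {μ : Measure α} [IsFiniteMeasure μ]

lemma integrable_of_ae_bounds {f : α → ℝ} {a b : ℝ} (hf : AEStronglyMeasurable f μ)
    (h : ∀ᵐ x ∂μ, a ≤ f x ∧ f x ≤ b) : Integrable f μ :=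
  Integrable.of_bound hf (max |a| |b|) (h.mono fun _ hx => abs_le_max_abs_abs hx.1 hx.2)

lemma integrable_log_of_ae_bounds {f : α → ℝ} {a b : ℝ} (hf : AEMeasurable f μ) (ha : 0 < a)
    (h : ∀ᵐ x ∂μ, a ≤ f x ∧ f x ≤ b) : Integrable (fun x => log (f x)) μ :=
  integrable_of_ae_bounds hf.log.aestronglyMeasurable <|
    h.mono fun _ hx => ⟨log_le_log ha hx.1, log_le_log (ha.trans_le hx.1) hx.2⟩

end Integrability

section CompoundReturn

variable {Ω : Type*} {m : ℕ} (X : ℕ → Ω → Fin m → ℝ) (n : ℕ) (ω : Ω) (i : Fin m)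

lemma compoundReturn_mem_Icc {a b : ℝ} (ha : -1 < a) (h : ∀ k, a ≤ X k ω i ∧ X k ω i ≤ b) :
    (1 + a) ^ n ≤ compoundReturn X n ω i ∧ compoundReturn X n ω i ≤ (1 + b) ^ n := by
  have hpos : 0 < 1 + a := by linarith
  have hconst : ∀ c : ℝ, c ^ n = ∏ _k ∈ range n, c := fun c => by rw [prod_const, card_range]
  rw [compoundReturn, hconst, hconst]
  exact ⟨prod_le_prod (fun _ _ => hpos.le) fun k _ => by linarith [(h k).1],
    prod_le_prod (fun k _ => by linarith [(h k).1]) fun k _ => by linarith [(h k).2]⟩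

lemma compoundReturn_pos (h : ∀ k, 0 < 1 + X k ω i) : 0 < compoundReturn X n ω i :=
  prod_pos fun k _ => h k

lemma log_compoundReturn (h : ∀ k, 1 + X k ω i ≠ 0) :
    log (compoundReturn X n ω i) = ∑ k ∈ range n, log (1 + X k ω i) :=
  log_prod fun k _ => h k

end CompoundReturn

section Portfolio

variable {ι : Type*} [Fintype ι] {K R : ι → ℝ}

lemma mul_le_sum_mul (hK : ∀ i, 0 ≤ K i) (hR : ∀ i, 0 ≤ R i) (j : ι) :
    K j * R j ≤ ∑ i, K i * R i :=
  single_le_sum (f := fun i => K i * R i) (fun i _ => mul_nonneg (hK i) (hR i)) (mem_univ j)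

lemma log_add_log_le_log_sum_mul (hK : ∀ i, 0 ≤ K i) {j : ι} (hKj : 0 < K j)
    (hR : ∀ i, 0 < R i) : log (K j) + log (R j) ≤ log (∑ i, K i * R i) := by
  rw [← log_mul hKj.ne' (hR j).ne']
  exact log_le_log (mul_pos hKj (hR j)) (mul_le_sum_mul hK (fun i => (hR i).le) j)

end Portfolio

section Growth

variable {Ω : Type*} [MeasureSpace Ω] {m : ℕ} {X : ℕ → Ω → Fin m → ℝ} {Xmin Xmax : Fin m → ℝ}

lemma integral_sum_log_one_add_eq (hident : ∀ k, IdentDistrib (X k) (X 0) ℙ ℙ)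
    {i : Fin m} {n : ℕ} (hint : ∀ k, Integrable fun ω => log (1 + X k ω i)) :
    ∫ ω, ∑ k ∈ range n, log (1 + X k ω i) = n * ∫ ω, log (1 + X 0 ω i) := by
  have hF : Measurable fun v : Fin m → ℝ => log (1 + v i) := by fun_prop
  have hk : ∀ k, ∫ ω, log (1 + X k ω i) = ∫ ω, log (1 + X 0 ω i) := fun k =>
    ((hident k).comp hF).integral_eq
  rw [integral_finsetSum _ fun k _ => hint k, sum_congr rfl fun k _ => hk k, sum_const,
    card_range, nsmul_eq_mul]

variable [IsProbabilityMeasure (ℙ : Measure Ω)] (hXmin : ∀ i, -1 < Xmin i)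
  (hbdd : ∀ k, ∀ᵐ ω ∂(ℙ : Measure Ω), ∀ i, Xmin i ≤ X k ω i ∧ X k ω i ≤ Xmax i)
include hXmin hbdd

lemma integrable_log_one_add {k : ℕ} (hX : AEMeasurable (X k)) (i : Fin m) :
    Integrable fun ω => log (1 + X k ω i) :=
  integrable_log_of_ae_bounds (a := 1 + Xmin i) (b := 1 + Xmax i) (by fun_prop)
    (by linarith [hXmin i]) <|
    (hbdd k).mono fun _ hω => ⟨by linarith [(hω i).1], by linarith [(hω i).2]⟩

lemma integrable_log_wealth (hX : ∀ k, AEMeasurable (X k)) {K : Fin m → ℝ} (hK : ∀ i, 0 ≤ K i)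
    {j : Fin m} (hKj : 0 < K j) (n : ℕ) :
    Integrable fun ω => log (∑ i, K i * compoundReturn X n ω i) := by
  refine integrable_log_of_ae_bounds (a := K j * (1 + Xmin j) ^ n)
    (b := ∑ i, K i * (1 + Xmax i) ^ n) (by unfold compoundReturn; fun_prop)
    (mul_pos hKj (pow_pos (by linarith [hXmin j]) n)) ?_
  filter_upwards [ae_all_iff.2 hbdd] with ω hω
  have hR i := compoundReturn_mem_Icc X n ω i (hXmin i) fun k => hω k i
  have hRpos i : 0 ≤ compoundReturn X n ω i :=
    (pow_pos (by linarith [hXmin i]) n).le.trans (hR i).1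
  exact ⟨(mul_le_mul_of_nonneg_left (hR j).1 (hK j)).trans (mul_le_sum_mul hK hRpos j),
    sum_le_sum fun i _ => mul_le_mul_of_nonneg_left (hR i).2 (hK i)⟩

theorem log_add_mul_integral_le_integral_log_wealth (hident : ∀ k, IdentDistrib (X k) (X 0) ℙ ℙ)
    {K : Fin m → ℝ} (hK : ∀ i, 0 ≤ K i) {j : Fin m} (hKj : 0 < K j) (n : ℕ) :
    log (K j) + n * ∫ ω, log (1 + X 0 ω j)
      ≤ ∫ ω, log (∑ i, K i * compoundReturn X n ω i) := by
  have hX k : AEMeasurable (X k) := (hident k).aemeasurable_fst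
  have hint k := integrable_log_one_add hXmin hbdd (hX k) j
  have hint_sum : Integrable fun ω => ∑ k ∈ range n, log (1 + X k ω j) :=
    integrable_finsetSum _ fun k _ => hint k
  calc log (K j) + n * ∫ ω, log (1 + X 0 ω j)
      = ∫ ω, (log (K j) + ∑ k ∈ range n, log (1 + X k ω j)) := by
        rw [integral_add (integrable_const _) hint_sum, integral_sum_log_one_add_eq hident hint,
          integral_const, probReal_univ, one_smul]
    _ ≤ ∫ ω, log (∑ i, K i * compoundReturn X n ω i) := by
        refine integral_mono_ae ((integrable_const _).add hint_sum)
          (integrable_log_wealth hXmin hbdd hX hK hKj n) ?_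
        filter_upwards [ae_all_iff.2 hbdd] with ω hω
        have hpos k i : 0 < 1 + X k ω i := by linarith [hXmin i, (hω k i).1]
        rw [← log_compoundReturn X n ω j fun k => (hpos k j).ne']
        exact log_add_log_le_log_sum_mul hK hKj fun i => compoundReturn_pos X n ω i (hpos · i)

end Growth

theorem buy_and_hold_gap_upper_bound_general
    {Ω : Type*} [MeasureSpace Ω] [IsProbabilityMeasure (ℙ : Measure Ω)]
    {m : ℕ}
    (X : ℕ → Ω → Fin m → ℝ)
    (hident : ∀ k, IdentDistrib (X k) (X 0) ℙ ℙ)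
    (Xmin Xmax : Fin m → ℝ)
    (hXmin : ∀ i, -1 < Xmin i)
    (hbdd : ∀ k, ∀ᵐ ω ∂(ℙ : Measure Ω), ∀ i, Xmin i ≤ X k ω i ∧ X k ω i ≤ Xmax i)
    (j : Fin m)
    (K : Fin m → ℝ) (hK : K ∈ simplex m) (hKj : 0 < K j) :
    ∀ n : ℕ, 1 ≤ n →
      (∫ ω, Real.log (1 + X 0 ω j)) - elg X n K ≤ (n : ℝ)⁻¹ * Real.log (1 / K j) := by
  intro n hn
  have hnpos : (0 : ℝ) < n := by exact_mod_cast hn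
  have key := log_add_mul_integral_le_integral_log_wealth hXmin hbdd hident hK.1 hKj n
  have := mul_le_mul_of_nonneg_left key (inv_nonneg.2 hnpos.le)
  rw [mul_add, inv_mul_cancel_left₀ hnpos.ne'] at this
  rw [elg, one_div, log_inv]
  linarith

/-- Upper bound on the optimality gap of buy and hold with a dominant asset:
`g_1^* - g_n(K) ≤ (1/n) log(1/K_j)`. -/
theorem buy_and_hold_gap_upper_bound
    {Ω : Type*} [MeasureSpace Ω] [IsProbabilityMeasure (ℙ : Measure Ω)]
    {m : ℕ} (hm : 2 ≤ m)
    (X : ℕ → Ω → Fin m → ℝ)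
    (hmeas : ∀ k, Measurable (X k))
    (hiid : iIndepFun X ℙ)
    (hident : ∀ k, IdentDistrib (X k) (X 0) ℙ ℙ)
    (Xmin Xmax : Fin m → ℝ)
    (hXmin : ∀ i, -1 < Xmin i)
    (hbdd : ∀ k, ∀ᵐ ω ∂(ℙ : Measure Ω), ∀ i, Xmin i ≤ X k ω i ∧ X k ω i ≤ Xmax i)
    (j : Fin m)
    (hdom : ∀ i, i ≠ j → ∫ ω, (1 + X 0 ω i) / (1 + X 0 ω j) ≤ 1)
    (K : Fin m → ℝ) (hK : K ∈ simplex m) (hKj : 0 < K j) :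
    ∀ n : ℕ, 1 ≤ n →
      (∫ ω, Real.log (1 + X 0 ω j)) - elg X n K ≤ (n : ℝ)⁻¹ * Real.log (1 / K j) :=
  buy_and_hold_gap_upper_bound_general X hident Xmin Xmax hXmin hbdd j K hK hKj
end

section
/- Assume additionally that for every n ≥ 1 the compound return vector R_n (equivalently 𝒳_n = R_n − 1) and the next one-period return vector X(n) are independent. Then high-frequency rebalancing is unbeatable in the expected-log-growth sense: g_n* ≤ g_1* for every n ≥ 1. -/
/-! A portfolio `K` held over one period with gross returns `r` becomes the portfolio
`driftWeights K r` while its value is multiplied by `K ⬝ᵥ r`. Hence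
`log (K ⬝ᵥ (r * y)) = log (K ⬝ᵥ r) + log (driftWeights K r ⬝ᵥ y)`. If the next period's
returns `y` are independent of `r`, integrating first in `y` bounds the second term by the
one-period optimum `g₁*`, because `driftWeights K r` is again in the simplex. By induction,
`E log (K ⬝ᵥ R_n) ≤ n g₁*` for every `K` in the simplex. -/

open MeasureTheory ProbabilityTheory Filter Topology Finset Real

theorem Real.abs_log_le_of_mem_Icc {L U x : ℝ} (hL : 0 < L) (hx : x ∈ Set.Icc L U) :
    |log x| ≤ max |log L| |log U| :=
  abs_le_max_abs_abs (log_le_log hL hx.1) (log_le_log (hL.trans_le hx.1) hx.2)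

section Simplex

variable {m : ℕ} {K r : Fin m → ℝ}

theorem dotProduct_mem_of_mem_simplex (hK : K ∈ simplex m) {s : Set ℝ} (hs : Convex ℝ s)
    (hr : ∀ i, r i ∈ s) : K ⬝ᵥ r ∈ s :=
  hs.sum_mem (fun i _ => hK.1 i) hK.2 fun i _ => hr i

theorem nonempty_of_mem_simplex (hK : K ∈ simplex m) : Nonempty (Fin m) :=
  let ⟨i, _⟩ := exists_ne_zero_of_sum_ne_zero (hK.2 ▸ one_ne_zero : ∑ i, K i ≠ 0)
  ⟨i⟩

noncomputable def driftWeights (K r : Fin m → ℝ) : Fin m → ℝ := fun i => K i * r i / (K ⬝ᵥ r)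

theorem driftWeights_mem_simplex (hK : K ∈ simplex m) (hr : ∀ i, 0 < r i) :
    driftWeights K r ∈ simplex m := by
  have hKr : 0 < K ⬝ᵥ r := dotProduct_mem_of_mem_simplex hK (convex_Ioi 0) hr
  refine ⟨fun i => div_nonneg (mul_nonneg (hK.1 i) (hr i).le) hKr.le, ?_⟩
  simp only [driftWeights, ← Finset.sum_div]
  exact div_self hKr.ne'

theorem dotProduct_mul_eq_mul_driftWeights (hKr : K ⬝ᵥ r ≠ 0) (y : Fin m → ℝ) :
    K ⬝ᵥ (r * y) = (K ⬝ᵥ r) * (driftWeights K r ⬝ᵥ y) := by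
  simp only [dotProduct, driftWeights, Finset.mul_sum, Pi.mul_apply] at hKr ⊢
  refine Finset.sum_congr rfl fun i _ => ?_
  field_simp

end Simplex

section LogGrowth

variable {α : Type*} [MeasurableSpace α] {μ : Measure α} {m : ℕ} {K : Fin m → ℝ}
  {R : α → Fin m → ℝ} {L U : ℝ}

theorem ae_norm_log_dotProduct_le (hK : K ∈ simplex m) (hL : 0 < L)
    (hR : ∀ᵐ x ∂μ, ∀ i, R x i ∈ Set.Icc L U) :
    ∀ᵐ x ∂μ, ‖log (K ⬝ᵥ R x)‖ ≤ max |log L| |log U| :=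
  hR.mono fun _ hx =>
    abs_log_le_of_mem_Icc hL (dotProduct_mem_of_mem_simplex hK (convex_Icc L U) hx)

theorem integrable_log_dotProduct [IsFiniteMeasure μ] (hK : K ∈ simplex m) (hL : 0 < L)
    (hRm : Measurable R) (hR : ∀ᵐ x ∂μ, ∀ i, R x i ∈ Set.Icc L U) :
    Integrable (fun x => log (K ⬝ᵥ R x)) μ :=
  .of_bound (by fun_prop : Measurable fun x => log (K ⬝ᵥ R x)).aestronglyMeasurable _
    (ae_norm_log_dotProduct_le hK hL hR)

theorem norm_integral_log_dotProduct_le [IsProbabilityMeasure μ] (hK : K ∈ simplex m)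
    (hL : 0 < L) (hR : ∀ᵐ x ∂μ, ∀ i, R x i ∈ Set.Icc L U) :
    ‖∫ x, log (K ⬝ᵥ R x) ∂μ‖ ≤ max |log L| |log U| := by
  simpa using norm_integral_le_of_norm_le_const (ae_norm_log_dotProduct_le hK hL hR)

theorem integral_log_dotProduct_mul_le_log_add {ν : Measure (Fin m → ℝ)}
    [IsProbabilityMeasure ν] {r : Fin m → ℝ} {g : ℝ} (hK : K ∈ simplex m) (hr : ∀ i, 0 < r i)
    (hL : 0 < L) (hν : ∀ᵐ y ∂ν, ∀ i, y i ∈ Set.Icc L U)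
    (hg : ∀ K' ∈ simplex m, ∫ y, log (K' ⬝ᵥ y) ∂ν ≤ g) :
    ∫ y, log (K ⬝ᵥ (r * y)) ∂ν ≤ log (K ⬝ᵥ r) + g := by
  have hK' := driftWeights_mem_simplex hK hr
  have hKr : 0 < K ⬝ᵥ r := dotProduct_mem_of_mem_simplex hK (convex_Ioi 0) hr
  have hsplit : ∀ᵐ y ∂ν,
      log (K ⬝ᵥ (r * y)) = log (K ⬝ᵥ r) + log (driftWeights K r ⬝ᵥ y) := by
    filter_upwards [hν] with y hy
    have hK'y : 0 < driftWeights K r ⬝ᵥ y :=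
      dotProduct_mem_of_mem_simplex hK' (convex_Ioi 0) fun i => hL.trans_le (hy i).1
    rw [dotProduct_mul_eq_mul_driftWeights hKr.ne', log_mul hKr.ne' hK'y.ne']
  rw [integral_congr_ae hsplit, integral_add (integrable_const _)
    (integrable_log_dotProduct (R := fun y => y) hK' hL measurable_id hν), integral_const]
  simpa using hg _ hK'

end LogGrowth

theorem ProbabilityTheory.IndepFun.integral_log_dotProduct_mul_le {Ω : Type*}
    [MeasurableSpace Ω] {P : Measure Ω} [IsProbabilityMeasure P] {m : ℕ} {K : Fin m → ℝ}
    {R Y : Ω → Fin m → ℝ} {L U L' U' g : ℝ} (hRY : IndepFun R Y P) (hRm : Measurable R)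
    (hYm : Measurable Y) (hK : K ∈ simplex m) (hL : 0 < L)
    (hR : ∀ᵐ ω ∂P, ∀ i, R ω i ∈ Set.Icc L U) (hL' : 0 < L')
    (hY : ∀ᵐ ω ∂P, ∀ i, Y ω i ∈ Set.Icc L' U')
    (hg : ∀ K' ∈ simplex m, ∫ ω, log (K' ⬝ᵥ Y ω) ∂P ≤ g) :
    ∫ ω, log (K ⬝ᵥ (R ω * Y ω)) ∂P ≤ (∫ ω, log (K ⬝ᵥ R ω) ∂P) + g := by
  set μ := P.map R
  set ν := P.map Y
  have : IsProbabilityMeasure μ := Measure.isProbabilityMeasure_map hRm.aemeasurable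
  have : IsProbabilityMeasure ν := Measure.isProbabilityMeasure_map hYm.aemeasurable
  have hRYm : Measurable fun ω => (R ω, Y ω) := hRm.prodMk hYm
  have hprod : P.map (fun ω => (R ω, Y ω)) = μ.prod ν :=
    (indepFun_iff_map_prod_eq_prod_map_map hRm.aemeasurable hYm.aemeasurable).1 hRY
  have hF : Measurable fun p : (Fin m → ℝ) × (Fin m → ℝ) => log (K ⬝ᵥ (p.1 * p.2)) := by
    fun_prop
  have hlogm : ∀ K' : Fin m → ℝ, Measurable fun r => log (K' ⬝ᵥ r) := fun _ => by fun_prop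
  have hRYb : ∀ᵐ ω ∂P, ∀ i, (R ω * Y ω) i ∈ Set.Icc (L * L') (U * U') := by
    filter_upwards [hR, hY] with ω h h' i
    obtain ⟨⟨hR₁, hR₂⟩, hY₁, hY₂⟩ := And.intro (h i) (h' i)
    exact ⟨mul_le_mul hR₁ hY₁ hL'.le (hL.trans_le hR₁).le,
      mul_le_mul hR₂ hY₂ (hL'.trans_le hY₁).le (hL.trans_le (hR₁.trans hR₂)).le⟩
  have hFint : Integrable (fun p : (Fin m → ℝ) × (Fin m → ℝ) => log (K ⬝ᵥ (p.1 * p.2)))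
      (μ.prod ν) := by
    rw [← hprod, integrable_map_measure hF.aestronglyMeasurable hRYm.aemeasurable]
    exact integrable_log_dotProduct hK (mul_pos hL hL') (hRm.mul hYm) hRYb
  have hμ : ∀ᵐ r ∂μ, ∀ i, r i ∈ Set.Icc L U :=
    (ae_map_iff hRm.aemeasurable (by measurability)).2 hR
  have hν : ∀ᵐ y ∂ν, ∀ i, y i ∈ Set.Icc L' U' :=
    (ae_map_iff hYm.aemeasurable (by measurability)).2 hY
  have hgν : ∀ K' ∈ simplex m, ∫ y, log (K' ⬝ᵥ y) ∂ν ≤ g := fun K' hK' => by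
    rw [integral_map hYm.aemeasurable (hlogm K').aestronglyMeasurable]
    exact hg K' hK'
  have hlogμ := integrable_log_dotProduct (R := fun r => r) hK hL measurable_id hμ
  calc ∫ ω, log (K ⬝ᵥ (R ω * Y ω)) ∂P = ∫ r, ∫ y, log (K ⬝ᵥ (r * y)) ∂ν ∂μ := by
        rw [← integral_prod _ hFint, ← hprod,
          integral_map hRYm.aemeasurable hF.aestronglyMeasurable]
    _ ≤ ∫ r, (log (K ⬝ᵥ r) + g) ∂μ :=
        integral_mono_ae hFint.integral_prod_left (hlogμ.add (integrable_const g))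
          (hμ.mono fun r hr =>
            integral_log_dotProduct_mul_le_log_add hK (fun i => hL.trans_le (hr i).1) hL' hν hgν)
    _ = (∫ ω, log (K ⬝ᵥ R ω) ∂P) + g := by
        rw [integral_add hlogμ (integrable_const g), integral_const,
          integral_map hRm.aemeasurable (hlogm K).aestronglyMeasurable]
        simp

section CompoundReturn

variable {Ω : Type*} {m : ℕ} (X : ℕ → Ω → Fin m → ℝ)

theorem compoundReturn_one (ω : Ω) : compoundReturn X 1 ω = 1 + X 0 ω := by
  ext i
  simp [compoundReturn]

theorem compoundReturn_succ (n : ℕ) (ω : Ω) :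
    compoundReturn X (n + 1) ω = compoundReturn X n ω * (1 + X n ω) := by
  ext i
  simp [compoundReturn, Finset.prod_range_succ]

variable [MeasurableSpace Ω] {P : Measure Ω}

theorem measurable_compoundReturn (hX : ∀ k, Measurable (X k)) (n : ℕ) :
    Measurable (compoundReturn X n) := by
  unfold compoundReturn
  fun_prop

theorem exists_ae_one_add_mem_Icc [Nonempty (Fin m)] {Xmin Xmax : Fin m → ℝ}
    (hXmin : ∀ i, -1 < Xmin i) (hbdd : ∀ k, ∀ᵐ ω ∂P, ∀ i, Xmin i ≤ X k ω i ∧ X k ω i ≤ Xmax i) :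
    ∃ L U, 0 < L ∧ ∀ k, ∀ᵐ ω ∂P, ∀ i, 1 + X k ω i ∈ Set.Icc L U := by
  obtain ⟨i₀, hi₀⟩ := Finite.exists_min Xmin
  obtain ⟨U, hU⟩ := Finite.exists_le Xmax
  refine ⟨1 + Xmin i₀, 1 + U, by linarith [hXmin i₀], fun k => ?_⟩
  filter_upwards [hbdd k] with ω h i
  exact ⟨by linarith [hi₀ i, (h i).1], by linarith [hU i, (h i).2]⟩

theorem ae_compoundReturn_mem_Icc {L U : ℝ} (hL : 0 ≤ L)
    (hXb : ∀ k, ∀ᵐ ω ∂P, ∀ i, 1 + X k ω i ∈ Set.Icc L U) (n : ℕ) :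
    ∀ᵐ ω ∂P, ∀ i, compoundReturn X n ω i ∈ Set.Icc (L ^ n) (U ^ n) := by
  filter_upwards [ae_all_iff.2 hXb] with ω h i
  constructor
  · simpa [compoundReturn] using
      Finset.prod_le_prod (s := range n) (fun _ _ => hL) (fun k _ => (h k i).1)
  · simpa [compoundReturn] using
      Finset.prod_le_prod (s := range n) (fun k _ => hL.trans (h k i).1) (fun k _ => (h k i).2)

theorem integral_log_dotProduct_compoundReturn_le [IsProbabilityMeasure P] {L U g : ℝ}
    (hX : ∀ k, Measurable (X k)) (hL : 0 < L)
    (hXb : ∀ k, ∀ᵐ ω ∂P, ∀ i, 1 + X k ω i ∈ Set.Icc L U)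
    (hindep : ∀ n, 1 ≤ n → IndepFun (compoundReturn X n) (X n) P)
    (hg : ∀ k, ∀ K ∈ simplex m, ∫ ω, log (K ⬝ᵥ (1 + X k ω)) ∂P ≤ g)
    {n : ℕ} (hn : 1 ≤ n) {K : Fin m → ℝ} (hK : K ∈ simplex m) :
    ∫ ω, log (K ⬝ᵥ compoundReturn X n ω) ∂P ≤ n * g := by
  induction n, hn using Nat.le_induction generalizing K with
  | base => simpa [compoundReturn_one] using hg 0 K hK
  | succ n hn ih =>
    have hind : IndepFun (compoundReturn X n) (fun ω => 1 + X n ω) P :=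
      (hindep n hn).comp measurable_id (measurable_const.add measurable_id)
    calc ∫ ω, log (K ⬝ᵥ compoundReturn X (n + 1) ω) ∂P
        = ∫ ω, log (K ⬝ᵥ (compoundReturn X n ω * (1 + X n ω))) ∂P := by
          simp only [compoundReturn_succ]
      _ ≤ (∫ ω, log (K ⬝ᵥ compoundReturn X n ω) ∂P) + g :=
          hind.integral_log_dotProduct_mul_le (measurable_compoundReturn X hX n)
            (measurable_const.add (hX n)) hK (pow_pos hL n)
            (ae_compoundReturn_mem_Icc X hL.le hXb n) hL (hXb n) (hg n)
      _ ≤ n * g + g := by gcongr; exact ih hK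
      _ = (n + 1 : ℕ) * g := by push_cast; ring

end CompoundReturn

section Elg

variable {Ω : Type*} [MeasureSpace Ω] {m : ℕ} (X : ℕ → Ω → Fin m → ℝ)

theorem elg_eq_inv_mul_integral (n : ℕ) (K : Fin m → ℝ) :
    elg X n K = (n : ℝ)⁻¹ * ∫ ω, log (K ⬝ᵥ compoundReturn X n ω) :=
  rfl

theorem integral_log_dotProduct_one_add_eq_elg_one
    (hident : ∀ k, IdentDistrib (X k) (X 0) ℙ ℙ) (k : ℕ) (K : Fin m → ℝ) :
    ∫ ω, log (K ⬝ᵥ (1 + X k ω)) = elg X 1 K := by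
  calc ∫ ω, log (K ⬝ᵥ (1 + X k ω)) = ∫ ω, log (K ⬝ᵥ (1 + X 0 ω)) :=
        ((hident k).comp (by fun_prop : Measurable fun x => log (K ⬝ᵥ (1 + x)))).integral_eq
    _ = elg X 1 K := by simp [elg_eq_inv_mul_integral, compoundReturn_one]

theorem bddAbove_elg_image [IsProbabilityMeasure (ℙ : Measure Ω)] {L U : ℝ} (hL : 0 < L)
    (hXb : ∀ k, ∀ᵐ ω ∂ℙ, ∀ i, 1 + X k ω i ∈ Set.Icc L U) (n : ℕ) :
    BddAbove (elg X n '' simplex m) := by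
  refine ⟨(n : ℝ)⁻¹ * max |log (L ^ n)| |log (U ^ n)|, Set.forall_mem_image.2 fun K hK => ?_⟩
  rw [elg_eq_inv_mul_integral]
  gcongr
  exact (le_norm_self _).trans
    (norm_integral_log_dotProduct_le hK (pow_pos hL n) (ae_compoundReturn_mem_Icc X hL.le hXb n))

end Elg

theorem high_frequency_maximality_general
    {Ω : Type*} [MeasureSpace Ω] [IsProbabilityMeasure (ℙ : Measure Ω)]
    {m : ℕ}
    (X : ℕ → Ω → Fin m → ℝ)
    (hmeas : ∀ k, Measurable (X k))
    (hident : ∀ k, IdentDistrib (X k) (X 0) ℙ ℙ)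
    (Xmin Xmax : Fin m → ℝ)
    (hXmin : ∀ i, -1 < Xmin i)
    (hbdd : ∀ k, ∀ᵐ ω ∂(ℙ : Measure Ω), ∀ i, Xmin i ≤ X k ω i ∧ X k ω i ≤ Xmax i)
    (hRindep : ∀ n : ℕ, 1 ≤ n →
      IndepFun (fun ω => compoundReturn X n ω) (X n) ℙ) :
    ∀ n : ℕ, 1 ≤ n →
      sSup (elg X n '' simplex m) ≤ sSup (elg X 1 '' simplex m) := by
  intro n hn
  rcases (simplex m).eq_empty_or_nonempty with hempty | hne
  · simp [hempty]
  have := nonempty_of_mem_simplex hne.some_mem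
  obtain ⟨L, U, hL, hXb⟩ := exists_ae_one_add_mem_Icc X hXmin hbdd
  have hg : ∀ k, ∀ K ∈ simplex m, ∫ ω, log (K ⬝ᵥ (1 + X k ω)) ≤ sSup (elg X 1 '' simplex m) :=
    fun k K hK => (integral_log_dotProduct_one_add_eq_elg_one X hident k K).trans_le
      (le_csSup (bddAbove_elg_image X hL hXb 1) (Set.mem_image_of_mem _ hK))
  refine csSup_le (hne.image _) (Set.forall_mem_image.2 fun K hK => ?_)
  rw [elg_eq_inv_mul_integral, inv_mul_le_iff₀ (by positivity)]
  exact integral_log_dotProduct_compoundReturn_le X hmeas hL hXb hRindep hg hn hK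

/-- **High-frequency maximality (under an independence hypothesis).** If for every `n ≥ 1` the
compound return vector `R_n` and the next one-period return vector `X(n)` are independent,
then `g_n^* ≤ g_1^*` for all `n ≥ 1`: high-frequency rebalancing is unbeatable in the ELG
sense. -/
theorem high_frequency_maximality
    {Ω : Type*} [MeasureSpace Ω] [IsProbabilityMeasure (ℙ : Measure Ω)]
    {m : ℕ} (hm : 2 ≤ m)
    (X : ℕ → Ω → Fin m → ℝ)
    (hmeas : ∀ k, Measurable (X k))
    (hiid : iIndepFun X ℙ)
    (hident : ∀ k, IdentDistrib (X k) (X 0) ℙ ℙ)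
    (Xmin Xmax : Fin m → ℝ)
    (hXmin : ∀ i, -1 < Xmin i)
    (hbdd : ∀ k, ∀ᵐ ω ∂(ℙ : Measure Ω), ∀ i, Xmin i ≤ X k ω i ∧ X k ω i ≤ Xmax i)
    (hRindep : ∀ n : ℕ, 1 ≤ n →
      IndepFun (fun ω => compoundReturn X n ω) (X n) ℙ) :
    ∀ n : ℕ, 1 ≤ n →
      sSup (elg X n '' simplex m) ≤ sSup (elg X 1 '' simplex m) :=
  high_frequency_maximality_general X hmeas hident Xmin Xmax hXmin hbdd hRindep
end
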